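/- Let Γ be a finitely generated subgroup of UT(n,ℚ). Then there exists an invertible diagonal n×n rational matrix P such that every entry of P A P⁻¹ is an integer for every A ∈ Γ (so that conjugation by P embeds Γ into UT(n,ℤ)); moreover, if every nontrivial element of Γ is essentially hyperbolic, then so is every nontrivial P A P⁻¹. -/

import Mathlib

section Matrices

variable {R : Type*} {n : ℕ}

theorem diag_mul_of_triangular [CommRing R] {A B : Matrix (Fin n) (Fin n) R}
    (hA : A.BlockTriangular id) (hB : B.BlockTriangular id) (i : Fin n) :
    (A * B) i i = A i i * B i i := by
  rw [Matrix.mul_apply]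
  apply Finset.sum_eq_single i
  · intro k _ hk
    rcases lt_or_gt_of_ne hk with h | h
    · rw [hA (show (id : Fin n → Fin n) k < id i from h), zero_mul]
    · rw [hB (show (id : Fin n → Fin n) i < id k from h), mul_zero]
  · intro h; exact absurd (Finset.mem_univ i) h

/-- The group `UT(n,R)` of upper triangular `n × n` matrices over `R` with all diagonal
entries equal to `1`, realised as a subgroup of the group of units of the matrix ring. -/
def UT (n : ℕ) (R : Type*) [CommRing R] : Subgroup (Matrix (Fin n) (Fin n) R)ˣ where
  carrier := {A | (∀ i j : Fin n, j < i → (A : Matrix (Fin n) (Fin n) R) i j = 0) ∧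
    ∀ i : Fin n, (A : Matrix (Fin n) (Fin n) R) i i = 1}
  one_mem' := by
    refine ⟨fun i j hij => ?_, fun i => ?_⟩
    · simp [Matrix.one_apply, (ne_of_lt hij).symm]
    · simp
  mul_mem' := by
    rintro A B ⟨hA1, hA2⟩ ⟨hB1, hB2⟩
    have hA : (A : Matrix (Fin n) (Fin n) R).BlockTriangular id := fun i j h => hA1 i j h
    have hB : (B : Matrix (Fin n) (Fin n) R).BlockTriangular id := fun i j h => hB1 i j h
    refine ⟨fun i j hij => ?_, fun i => ?_⟩
    · exact (hA.mul hB) (show (id : Fin n → Fin n) j < id i from hij)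
    · rw [Units.val_mul, diag_mul_of_triangular hA hB, hA2, hB2, one_mul]
  inv_mem' := by
    rintro A ⟨hA1, hA2⟩
    have hA : (A : Matrix (Fin n) (Fin n) R).BlockTriangular id := fun i j h => hA1 i j h
    haveI := A.invertible
    have hAinv : ((A : Matrix (Fin n) (Fin n) R)⁻¹).BlockTriangular id :=
      Matrix.blockTriangular_inv_of_blockTriangular hA
    have hcoe : ((A⁻¹ : (Matrix (Fin n) (Fin n) R)ˣ) : Matrix (Fin n) (Fin n) R)
        = (A : Matrix (Fin n) (Fin n) R)⁻¹ := Matrix.coe_units_inv A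
    refine ⟨fun i j hij => ?_, fun i => ?_⟩
    · rw [hcoe]; exact hAinv (show (id : Fin n → Fin n) j < id i from hij)
    · have h1 : ((A : Matrix (Fin n) (Fin n) R) * (A : Matrix (Fin n) (Fin n) R)⁻¹) i i = 1 := by
        rw [Matrix.mul_inv_of_invertible]; simp
      rw [diag_mul_of_triangular hA hAinv, hA2, one_mul] at h1
      rw [hcoe, h1]

/-- The group `T*(n,R)` of upper triangular `n × n` matrices over a linearly ordered field `R`
with positive diagonal entries, realised as a subgroup of the units of the matrix ring. -/
def Tstar (n : ℕ) (R : Type*) [Field R] [LinearOrder R] [IsStrictOrderedRing R] : Subgroup (Matrix (Fin n) (Fin n) R)ˣ where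
  carrier := {A | (∀ i j : Fin n, j < i → (A : Matrix (Fin n) (Fin n) R) i j = 0) ∧
    ∀ i : Fin n, 0 < (A : Matrix (Fin n) (Fin n) R) i i}
  one_mem' := by
    refine ⟨fun i j hij => ?_, fun i => ?_⟩
    · simp [Matrix.one_apply, (ne_of_lt hij).symm]
    · simp
  mul_mem' := by
    rintro A B ⟨hA1, hA2⟩ ⟨hB1, hB2⟩
    have hA : (A : Matrix (Fin n) (Fin n) R).BlockTriangular id := fun i j h => hA1 i j h
    have hB : (B : Matrix (Fin n) (Fin n) R).BlockTriangular id := fun i j h => hB1 i j h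
    refine ⟨fun i j hij => ?_, fun i => ?_⟩
    · exact (hA.mul hB) (show (id : Fin n → Fin n) j < id i from hij)
    · rw [Units.val_mul, diag_mul_of_triangular hA hB]
      exact mul_pos (hA2 i) (hB2 i)
  inv_mem' := by
    rintro A ⟨hA1, hA2⟩
    have hA : (A : Matrix (Fin n) (Fin n) R).BlockTriangular id := fun i j h => hA1 i j h
    haveI := A.invertible
    have hAinv : ((A : Matrix (Fin n) (Fin n) R)⁻¹).BlockTriangular id :=
      Matrix.blockTriangular_inv_of_blockTriangular hA
    have hcoe : ((A⁻¹ : (Matrix (Fin n) (Fin n) R)ˣ) : Matrix (Fin n) (Fin n) R)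
        = (A : Matrix (Fin n) (Fin n) R)⁻¹ := Matrix.coe_units_inv A
    refine ⟨fun i j hij => ?_, fun i => ?_⟩
    · rw [hcoe]; exact hAinv (show (id : Fin n → Fin n) j < id i from hij)
    · have h1 : ((A : Matrix (Fin n) (Fin n) R) * (A : Matrix (Fin n) (Fin n) R)⁻¹) i i = 1 := by
        rw [Matrix.mul_inv_of_invertible]; simp
      rw [diag_mul_of_triangular hA hAinv] at h1
      rw [hcoe]
      rcases lt_trichotomy ((A : Matrix (Fin n) (Fin n) R)⁻¹ i i) 0 with h | h | h
      · exact absurd h1 (by nlinarith [hA2 i])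
      · rw [h, mul_zero] at h1; exact absurd h1 zero_ne_one
      · exact h

/-- The last index of `Fin N` (any element of `Fin N` witnesses `0 < N`). -/
def lastOf {N : ℕ} (r : Fin N) : Fin N := ⟨N - 1, Nat.sub_lt r.pos Nat.one_pos⟩

/-- A square matrix `g` (upper triangular, with positive diagonal and bottom-right entry `1`)
is *essentially hyperbolic* if `g ≠ 1` and there is a row index `r` which is not the last row
such that `(g-1)_{r,N} ≠ 0` (where `N` is the last column) and every nonzero entry of `g - 1`
lies either in a row strictly above `r`, or at position `(r, N)`. -/
def EssentiallyHyperbolic {N : ℕ} {R : Type*} [CommRing R]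
    (g : Matrix (Fin N) (Fin N) R) : Prop :=
  g ≠ 1 ∧ ∃ r : Fin N, (r : ℕ) + 1 < N ∧ (g - 1) r (lastOf r) ≠ 0 ∧
    ∀ i j : Fin N, (g - 1) i j ≠ 0 → i < r ∨ (i = r ∧ j = lastOf r)

end Matrices

/-- The group of order-preserving additive automorphisms of a linearly ordered abelian
group `Λ`, as a subgroup of `AddAut Λ`. -/
def orderAddAut (Λ : Type*) [AddCommGroup Λ] [LinearOrder Λ] [IsOrderedAddMonoid Λ] : AddSubgroup (AddAut Λ) where
  carrier := {f | StrictMono f}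
  zero_mem' := strictMono_id
  add_mem' := by
    intro f g hf hg a b hab
    exact hf (hg hab)
  neg_mem' := by
    intro f hf a b hab
    exact hf.lt_iff_lt.1 (by simpa using hab)

/-!
As a monoid, `Γ` is generated by finitely many matrices; let `c` be a common denominator of their
entries. Conjugating by `P = diag(1, c⁻¹, c⁻², …)` multiplies the `(i, j)` entry by `c ^ (j - i)`,
which makes each generator integral since it is unitriangular; hence all of `Γ` becomes integral,
integral matrices being closed under products. Conjugation by an invertible diagonal matrix does
not change which entries of `A - 1` vanish, and essential hyperbolicity depends only on that.
-/

section DiagonalUnits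

variable {n R : Type*} [Fintype n] [DecidableEq n] [CommRing R]

def diagonalUnits (u : n → Rˣ) : (Matrix n n R)ˣ where
  val := Matrix.diagonal fun i => u i
  inv := Matrix.diagonal fun i => ↑(u i)⁻¹
  val_inv := by simp [Matrix.diagonal_mul_diagonal]
  inv_val := by simp [Matrix.diagonal_mul_diagonal]

theorem diagonalUnits_conj_apply (u : n → Rˣ) (M : Matrix n n R) (i j : n) :
    ((diagonalUnits u : Matrix n n R) * M * ((diagonalUnits u)⁻¹ : (Matrix n n R)ˣ)) i j =
      u i * M i j * ↑(u j)⁻¹ := by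
  simp [diagonalUnits, Matrix.diagonal_mul, Matrix.mul_diagonal, Units.inv_mk]

theorem diagonalUnits_zpow_conj_apply {N : ℕ} (a : Rˣ) (M : Matrix (Fin N) (Fin N) R)
    (i j : Fin N) :
    ((diagonalUnits fun k : Fin N => a ^ (-(k : ℤ)) : Matrix (Fin N) (Fin N) R) * M *
        ((diagonalUnits fun k : Fin N => a ^ (-(k : ℤ)))⁻¹ : (Matrix (Fin N) (Fin N) R)ˣ)) i j =
      ↑(a ^ ((j : ℤ) - i)) * M i j := by
  rw [diagonalUnits_conj_apply, mul_right_comm, ← Units.val_mul, ← zpow_neg, ← zpow_add]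
  ring_nf

end DiagonalUnits

section EssentiallyHyperbolic

variable {N : ℕ} {R : Type*} [CommRing R]

theorem EssentiallyHyperbolic.of_sub_one_apply_eq_zero_iff {g h : Matrix (Fin N) (Fin N) R}
    (hg : EssentiallyHyperbolic g) (hgh : ∀ i j, (h - 1) i j = 0 ↔ (g - 1) i j = 0) :
    EssentiallyHyperbolic h := by
  obtain ⟨hg1, r, hr, hrN, hsupp⟩ := hg
  refine ⟨fun h1 => hg1 ?_, r, hr, fun h0 => hrN ((hgh _ _).1 h0),
    fun i j hij => hsupp i j fun h0 => hij ((hgh i j).2 h0)⟩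
  ext i j
  simpa [h1, sub_eq_zero] using (hgh i j).1

theorem EssentiallyHyperbolic.conj_diagonalUnits {A : (Matrix (Fin N) (Fin N) R)ˣ}
    (hA : EssentiallyHyperbolic (A : Matrix (Fin N) (Fin N) R)) (u : Fin N → Rˣ) :
    EssentiallyHyperbolic
      ((diagonalUnits u * A * (diagonalUnits u)⁻¹ : (Matrix (Fin N) (Fin N) R)ˣ) :
        Matrix (Fin N) (Fin N) R) := by
  refine hA.of_sub_one_apply_eq_zero_iff fun i j => ?_
  have hconj : ((diagonalUnits u * A * (diagonalUnits u)⁻¹ : (Matrix (Fin N) (Fin N) R)ˣ) :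
      Matrix (Fin N) (Fin N) R) - 1 = (diagonalUnits u : Matrix (Fin N) (Fin N) R) *
        (A - 1) * ((diagonalUnits u)⁻¹ : (Matrix (Fin N) (Fin N) R)ˣ) := by
    rw [mul_sub, sub_mul, mul_one, Units.mul_inv, Units.val_mul, Units.val_mul]
  rw [hconj, diagonalUnits_conj_apply]
  simp

end EssentiallyHyperbolic

theorem Rat.natCast_mul_mem_bot_of_den_dvd {q : ℚ} {c : ℕ} (h : q.den ∣ c) :
    (c : ℚ) * q ∈ (⊥ : Subring ℚ) := by
  obtain ⟨k, rfl⟩ := h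
  refine Subring.mem_bot.2 ⟨k * q.num, ?_⟩
  push_cast
  rw [mul_comm (q.den : ℚ), mul_assoc, Rat.den_mul_eq_num]

theorem zpow_sub_mul_apply_mem_bot_of_mem_UT {n : ℕ} {A : (Matrix (Fin n) (Fin n) ℚ)ˣ}
    (hA : A ∈ UT n ℚ) {c : ℕ} (hc : (A : Matrix (Fin n) (Fin n) ℚ).den ∣ c) (i j : Fin n) :
    (c : ℚ) ^ ((j : ℤ) - i) * (A : Matrix (Fin n) (Fin n) ℚ) i j ∈ (⊥ : Subring ℚ) := by
  obtain ⟨hlower, hdiag⟩ := hA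
  rcases lt_trichotomy j i with hji | rfl | hij
  · simp [hlower i j hji]
  · simp [hdiag]
  · obtain ⟨m, hm⟩ : ∃ m : ℕ, (j : ℤ) - i = (m + 1 : ℕ) := ⟨j - i - 1, by omega⟩
    rw [hm, zpow_natCast, pow_succ, mul_assoc]
    exact mul_mem (pow_mem (natCast_mem _ c) m)
      (Rat.natCast_mul_mem_bot_of_den_dvd ((Matrix.den_dvd_iff.1 hc) i j))

/-- A finitely generated subgroup `Γ` of `UT(n,ℚ)` can be conjugated by an
invertible diagonal rational matrix `P` so that all entries of `P A P⁻¹` (`A ∈ Γ`) are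
integers; moreover this conjugation preserves essential hyperbolicity of all nontrivial
elements. -/
theorem fg_subgroup_UT_rat_conjugate_into_UT_int (n : ℕ)
    (Γ : Subgroup (Matrix (Fin n) (Fin n) ℚ)ˣ) (hΓsub : Γ ≤ UT n ℚ) (hΓfg : Γ.FG) :
    ∃ P : (Matrix (Fin n) (Fin n) ℚ)ˣ,
      (∀ i j : Fin n, i ≠ j → (P : Matrix (Fin n) (Fin n) ℚ) i j = 0) ∧
      (∀ A ∈ Γ, ∀ i j : Fin n, ∃ z : ℤ,
        ((P * A * P⁻¹ : (Matrix (Fin n) (Fin n) ℚ)ˣ) : Matrix (Fin n) (Fin n) ℚ) i j = z) ∧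
      ((∀ A ∈ Γ, A ≠ 1 →
          EssentiallyHyperbolic ((A : Matrix (Fin n) (Fin n) ℚ))) →
        ∀ A ∈ Γ, A ≠ 1 →
          EssentiallyHyperbolic
            ((P * A * P⁻¹ : (Matrix (Fin n) (Fin n) ℚ)ˣ) : Matrix (Fin n) (Fin n) ℚ)) := by
  obtain ⟨T, hT⟩ := (Subgroup.fg_iff_submonoid_fg Γ).1 hΓfg
  set c := ∏ A ∈ T, (A : Matrix (Fin n) (Fin n) ℚ).den
  have hc : (c : ℚ) ≠ 0 :=
    Nat.cast_ne_zero.2 (Finset.prod_ne_zero_iff.2 fun A _ => Matrix.den_ne_zero _)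
  have hden : ∀ A ∈ T, (A : Matrix (Fin n) (Fin n) ℚ).den ∣ c :=
    fun A hA => Finset.dvd_prod_of_mem _ hA
  set P := diagonalUnits fun k : Fin n => Units.mk0 (c : ℚ) hc ^ (-(k : ℤ))
  have hintegral : Γ.toSubmonoid ≤ (⊥ : Subring ℚ).matrix.toSubmonoid.comap
      ((Units.coeHom _).comp (MulAut.conj P).toMonoidHom) := by
    rw [← hT, Submonoid.closure_le]
    intro A hA i j
    have hAΓ : A ∈ Γ.toSubmonoid := hT ▸ Submonoid.subset_closure hA
    change ((P : Matrix (Fin n) (Fin n) ℚ) * A * (P⁻¹ : (Matrix (Fin n) (Fin n) ℚ)ˣ)) i j ∈ _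
    rw [diagonalUnits_zpow_conj_apply, Units.val_zpow_eq_zpow_val, Units.val_mk0]
    exact zpow_sub_mul_apply_mem_bot_of_mem_UT (hΓsub hAΓ) (hden A hA) i j
  refine ⟨P, fun i j hij => Matrix.diagonal_apply_ne _ hij, fun A hA i j => ?_,
    fun hEH A hA hA1 => (hEH A hA hA1).conj_diagonalUnits _⟩
  obtain ⟨z, hz⟩ := Subring.mem_bot.1 (hintegral hA i j)
  exact ⟨z, hz.symm⟩
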